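/- arXiv:2411.00152 — 2 statements merged into one kernel-verified Lean document; each statement's English description precedes it below -/
import Mathlib

section
/- Let a = 7/8, b = 4/5, μ = 7/30, δ > 0, E > 0. If E > E*ℓ(δ), then the Jacobian J(0, θ_Sℓ) of the desingularized flow satisfies trace(J(0, θ_Sℓ)) = −1 and det(J(0, θ_Sℓ)) = −2δ·√(R_δ² − μ²) < 0; hence J(0, θ_Sℓ) has two real eigenvalues of opposite sign (the folded singularity at θ_Sℓ is a folded saddle). Likewise, if E > E*r(δ), then trace(J(2, θ_Sr)) = −1 and det(J(2, θ_Sr)) = −2δ·√(R_δ² − G(2)²) < 0, so J(2, θ_Sr) has two real eigenvalues of opposite sign. -/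
/-!
Both Jacobians have the shape `!![-1, -S; c, 0]`, so the trace is `-1` and the determinant is
`c * S`. At the left fold `θ_Sℓ - φ = arccos (μ / R)`, and at the right fold
`θ_Sr - φ ≡ -arccos (G(2) / R)` modulo `2π`; in both cases `R * sin (θ - φ) = ±√(R² - k²)`
with the sign opposite to that of `c = 2δ(u - 1)`, so the determinant is `-2δ√(R² - k²) < 0`.
A real `2 × 2` matrix with negative determinant has discriminant `tr² - 4 det > tr²`, hence one
negative and one positive real eigenvalue.
-/

open Real Set Matrix

namespace Matrix

theorem exists_mulVec_eq_smul_of_sq_sub_trace_mul_add_det_eq_zero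
    {K : Type*} [Field K] (A : Matrix (Fin 2) (Fin 2) K) {r : K}
    (hr : r ^ 2 - A.trace * r + A.det = 0) : ∃ v ≠ 0, A *ᵥ v = r • v := by
  have hdet : (A - r • 1).det = 0 := by
    rw [det_fin_two, ← hr, trace_fin_two, det_fin_two]
    simp only [sub_apply, smul_apply, one_apply_eq, one_apply_ne zero_ne_one,
      one_apply_ne one_ne_zero, smul_eq_mul]
    ring
  obtain ⟨v, hv, hAv⟩ := exists_mulVec_eq_zero_iff.mpr hdet
  refine ⟨v, hv, ?_⟩
  rwa [sub_mulVec, smul_mulVec, one_mulVec, sub_eq_zero] at hAv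

theorem exists_eigenvalues_neg_pos_of_det_neg (A : Matrix (Fin 2) (Fin 2) ℝ) (hA : A.det < 0) :
    ∃ lam₁ lam₂ : ℝ, lam₁ < 0 ∧ 0 < lam₂ ∧
      (∃ v : Fin 2 → ℝ, v ≠ 0 ∧ A *ᵥ v = lam₁ • v) ∧
      (∃ w : Fin 2 → ℝ, w ≠ 0 ∧ A *ᵥ w = lam₂ • w) := by
  set t := A.trace
  set s := √(t ^ 2 - 4 * A.det)
  have hs : s ^ 2 = t ^ 2 - 4 * A.det := sq_sqrt (by nlinarith)
  have ht : |t| < s := by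
    rw [← sqrt_sq_eq_abs]
    exact sqrt_lt_sqrt (sq_nonneg t) (by linarith)
  obtain ⟨ht₁, ht₂⟩ := abs_lt.mp ht
  refine ⟨(t - s) / 2, (t + s) / 2, by linarith, by linarith,
    A.exists_mulVec_eq_smul_of_sq_sub_trace_mul_add_det_eq_zero ?_,
    A.exists_mulVec_eq_smul_of_sq_sub_trace_mul_add_det_eq_zero ?_⟩ <;> linear_combination hs / 4

end Matrix

theorem Real.mul_sin_arccos_div {R k : ℝ} (hR : 0 < R) (hk : |k| ≤ R) :
    R * sin (arccos (k / R)) = √(R ^ 2 - k ^ 2) := by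
  have hk2 : k ^ 2 ≤ R ^ 2 := sq_le_sq' (abs_le.mp hk).1 (abs_le.mp hk).2
  rw [sin_arccos, div_pow, one_sub_div (pow_pos hR 2).ne', sqrt_div (by linarith),
    sqrt_sq hR.le, mul_div_cancel₀ _ hR.ne']

theorem foldedSaddle_of_jacobian {S c D : ℝ} (hcS : c * S = -D) (hD : 0 < D) :
    let J : Matrix (Fin 2) (Fin 2) ℝ := !![-1, -S; c, 0]
    J.trace = -1 ∧ J.det = -D ∧ J.det < 0 ∧
      ∃ lam₁ lam₂ : ℝ, lam₁ < 0 ∧ 0 < lam₂ ∧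
        (∃ v : Fin 2 → ℝ, v ≠ 0 ∧ J.mulVec v = lam₁ • v) ∧
        (∃ w : Fin 2 → ℝ, w ≠ 0 ∧ J.mulVec w = lam₂ • w) := by
  intro J
  have hdet : J.det = -D := by simp only [J, det_fin_two_of]; linarith
  exact ⟨by simp [J, trace_fin_two_of], hdet, by linarith,
    J.exists_eigenvalues_neg_pos_of_det_neg (by linarith)⟩

theorem stmt_4_general (b μ δ E R φ : ℝ)
    (hμ : μ = 7/30)
    (hδ : 0 < δ)
    (hR : R = E * Real.sqrt (b^2 + δ^2)) :
    (E > μ / Real.sqrt (b^2 + δ^2) →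
      let θSℓ := φ + Real.arccos (μ / R)
      let J : Matrix (Fin 2) (Fin 2) ℝ :=
        !![-1, -(R * Real.sin (θSℓ - φ)); 2*δ*(0 - 1), 0]
      Matrix.trace J = -1 ∧
      J.det = -(2*δ*Real.sqrt (R^2 - μ^2)) ∧ J.det < 0 ∧
      ∃ lam₁ lam₂ : ℝ, lam₁ < 0 ∧ 0 < lam₂ ∧
        (∃ v : Fin 2 → ℝ, v ≠ 0 ∧ J.mulVec v = lam₁ • v) ∧
        (∃ w : Fin 2 → ℝ, w ≠ 0 ∧ J.mulVec w = lam₂ • w)) ∧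
    (E > (7/6) / Real.sqrt (b^2 + δ^2) →
      let θSr := if Real.arccos ((7/6) / R) ≤ φ then φ - Real.arccos ((7/6) / R)
                 else φ - Real.arccos ((7/6) / R) + 2*π
      let J : Matrix (Fin 2) (Fin 2) ℝ :=
        !![-1, -(R * Real.sin (θSr - φ)); 2*δ*(2 - 1), 0]
      Matrix.trace J = -1 ∧
      J.det = -(2*δ*Real.sqrt (R^2 - (7/6)^2)) ∧ J.det < 0 ∧
      ∃ lam₁ lam₂ : ℝ, lam₁ < 0 ∧ 0 < lam₂ ∧
        (∃ v : Fin 2 → ℝ, v ≠ 0 ∧ J.mulVec v = lam₁ • v) ∧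
        (∃ w : Fin 2 → ℝ, w ≠ 0 ∧ J.mulVec w = lam₂ • w)) := by
  have hsqrt : 0 < √(b ^ 2 + δ ^ 2) := by positivity
  constructor
  · intro hE θSℓ
    have hμR : μ < R := hR ▸ (div_lt_iff₀ hsqrt).mp hE
    have hμ₀ : 0 < μ := by norm_num [hμ]
    have hS : R * sin (θSℓ - φ) = √(R ^ 2 - μ ^ 2) := by
      rw [add_sub_cancel_left,
        mul_sin_arccos_div (by linarith) (abs_le.mpr ⟨by linarith, by linarith⟩)]
    refine foldedSaddle_of_jacobian (by rw [hS]; ring) ?_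
    have : 0 < R ^ 2 - μ ^ 2 := by nlinarith
    positivity
  · intro hE θSr
    have hkR : (7/6 : ℝ) < R := hR ▸ (div_lt_iff₀ hsqrt).mp hE
    have hsin : sin (θSr - φ) = -sin (arccos (7/6 / R)) := by
      simp only [θSr]
      split_ifs
      · rw [sub_sub_cancel_left, sin_neg]
      · rw [sub_add_comm, add_sub_cancel_right, sin_two_pi_sub]
    have hS : R * sin (θSr - φ) = -√(R ^ 2 - (7/6) ^ 2) := by
      rw [hsin, mul_neg,
        mul_sin_arccos_div (by linarith) (abs_le.mpr ⟨by linarith, by linarith⟩)]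
    refine foldedSaddle_of_jacobian (by rw [hS]; ring) ?_
    have : 0 < R ^ 2 - (7/6) ^ 2 := by nlinarith
    positivity

/-- For `a = 7/8`, `b = 4/5`, `μ = 7/30`, `δ > 0`, `E > 0`:
if `E > E*ℓ(δ)`, the Jacobian `J(0, θ_Sℓ) = [[−G'(0), −R sin(θ_Sℓ − φ)], [2δ(0−1), 0]]`
has trace `−1` and determinant `−2δ√(R² − μ²) < 0`, hence two real eigenvalues of
opposite sign; likewise if `E > E*r(δ)`, then `J(2, θ_Sr)` has trace `−1` and
determinant `−2δ√(R² − G(2)²) < 0` and two real eigenvalues of opposite sign. -/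
theorem stmt_4 (a b μ δ E R φ : ℝ)
    (ha : a = 7/8) (hb : b = 4/5) (hμ : μ = 7/30)
    (hδ : 0 < δ) (hE : 0 < E)
    (hR : R = E * Real.sqrt (b^2 + δ^2))
    (hφ : φ = Real.arctan (b / δ)) :
    (E > μ / Real.sqrt (b^2 + δ^2) →
      let θSℓ := φ + Real.arccos (μ / R)
      let J : Matrix (Fin 2) (Fin 2) ℝ :=
        !![-1, -(R * Real.sin (θSℓ - φ)); 2*δ*(0 - 1), 0]
      Matrix.trace J = -1 ∧
      J.det = -(2*δ*Real.sqrt (R^2 - μ^2)) ∧ J.det < 0 ∧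
      ∃ lam₁ lam₂ : ℝ, lam₁ < 0 ∧ 0 < lam₂ ∧
        (∃ v : Fin 2 → ℝ, v ≠ 0 ∧ J.mulVec v = lam₁ • v) ∧
        (∃ w : Fin 2 → ℝ, w ≠ 0 ∧ J.mulVec w = lam₂ • w)) ∧
    (E > (7/6) / Real.sqrt (b^2 + δ^2) →
      let θSr := if Real.arccos ((7/6) / R) ≤ φ then φ - Real.arccos ((7/6) / R)
                 else φ - Real.arccos ((7/6) / R) + 2*π
      let J : Matrix (Fin 2) (Fin 2) ℝ :=
        !![-1, -(R * Real.sin (θSr - φ)); 2*δ*(2 - 1), 0]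
      Matrix.trace J = -1 ∧
      J.det = -(2*δ*Real.sqrt (R^2 - (7/6)^2)) ∧ J.det < 0 ∧
      ∃ lam₁ lam₂ : ℝ, lam₁ < 0 ∧ 0 < lam₂ ∧
        (∃ v : Fin 2 → ℝ, v ≠ 0 ∧ J.mulVec v = lam₁ • v) ∧
        (∃ w : Fin 2 → ℝ, w ≠ 0 ∧ J.mulVec w = lam₂ • w)) :=
  stmt_4_general b μ δ E R φ hμ hδ hR
end

section
/- Let a = 7/8, b = 4/5, μ = 7/30, δ > 0, and E > E*ℓ(δ). Then the Jacobian J(0, θ_Nℓ) satisfies trace(J(0, θ_Nℓ)) = −1 < 0 and det(J(0, θ_Nℓ)) = 2δ·√(R_δ² − μ²) > 0, and its discriminant satisfies trace² − 4·det = 1 − 8δ·√(R_δ² − μ²). Moreover, 1 − 8δ·√(R_δ² − μ²) > 0 (folded node) if and only if E < E**ℓ(δ) := √( (E*ℓ(δ))² + 1/(64·δ²·(b² + δ²)) ), and 1 − 8δ·√(R_δ² − μ²) < 0 (folded focus) if and only if E > E**ℓ(δ). -/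
open Real Matrix

/-! At the fold point `u = 0` the trace is `-G'(0) = -1`, and since `θ_Nℓ - φ ≡ -arccos (μ / R)`
(mod `2π`), the off-diagonal product gives `det J = 2δ R sin (arccos (μ / R)) = 2δ √(R² - μ²)`.
The discriminant `1 - 8δ √(R² - μ²)` changes sign exactly where `R² - μ² = 1 / (8δ)²`, i.e. where
`E² (b² + δ²) = μ² + 1 / (64δ²)`, which is the threshold `E**ℓ`. -/

lemma sin_sub_eq_neg_sqrt_of_eq_sub_arccos {θ φ x : ℝ}
    (hθ : θ = if arccos x ≤ φ then φ - arccos x else φ - arccos x + 2 * π) :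
    sin (θ - φ) = -√(1 - x ^ 2) := by
  subst hθ
  split_ifs
  · rw [sub_sub_cancel_left, sin_neg, sin_arccos]
  · rw [add_sub_right_comm, sub_sub_cancel_left, sin_add_two_pi, sin_neg, sin_arccos]

lemma mul_sqrt_one_sub_div_sq {R μ : ℝ} (hR : 0 < R) :
    R * √(1 - (μ / R) ^ 2) = √(R ^ 2 - μ ^ 2) := by
  have hfactor : R ^ 2 - μ ^ 2 = R ^ 2 * (1 - (μ / R) ^ 2) := by field_simp
  rw [hfactor, sqrt_mul (sq_nonneg R), sqrt_sq hR.le]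

lemma one_sub_mul_sqrt_pos_iff {k D : ℝ} (hk : 0 < k) :
    0 < 1 - k * √D ↔ D < 1 / k ^ 2 := by
  rw [sub_pos, ← lt_div_iff₀' hk, sqrt_lt' (one_div_pos.mpr hk), div_pow, one_pow]

lemma one_sub_mul_sqrt_neg_iff {k D : ℝ} (hk : 0 < k) :
    1 - k * √D < 0 ↔ 1 / k ^ 2 < D := by
  rw [sub_neg, ← div_lt_iff₀' hk, lt_sqrt (one_div_pos.mpr hk).le, div_pow, one_pow]

section Threshold

variable {E S μ c : ℝ}

lemma sq_mul_sqrt_sub_sq_lt_iff (hE : 0 ≤ E) (hS : 0 < S) :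
    (E * √S) ^ 2 - μ ^ 2 < c ↔ E < √((μ / √S) ^ 2 + c / S) := by
  rw [lt_sqrt hE, div_pow, mul_pow, sq_sqrt hS.le, ← add_div, lt_div_iff₀ hS,
    sub_lt_iff_lt_add']

lemma lt_sq_mul_sqrt_sub_sq_iff (hE : 0 < E) (hS : 0 < S) :
    c < (E * √S) ^ 2 - μ ^ 2 ↔ √((μ / √S) ^ 2 + c / S) < E := by
  rw [sqrt_lt' hE, div_pow, mul_pow, sq_sqrt hS.le, ← add_div, div_lt_iff₀ hS,
    lt_sub_iff_add_lt']

end Threshold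

theorem stmt_5_general (b μ δ E R φ θNℓ : ℝ)
    (hμ : μ = 7/30)
    (hδ : 0 < δ)
    (hR : R = E * Real.sqrt (b^2 + δ^2))
    (hEℓ : E > μ / Real.sqrt (b^2 + δ^2))
    (hθN : θNℓ = if Real.arccos (μ / R) ≤ φ then φ - Real.arccos (μ / R)
                 else φ - Real.arccos (μ / R) + 2*π) :
    let J : Matrix (Fin 2) (Fin 2) ℝ :=
      !![-1, -(R * Real.sin (θNℓ - φ)); 2*δ*(0 - 1), 0]
    Matrix.trace J = -1 ∧ Matrix.trace J < 0 ∧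
    J.det = 2*δ*Real.sqrt (R^2 - μ^2) ∧ 0 < J.det ∧
    (Matrix.trace J)^2 - 4 * J.det = 1 - 8*δ*Real.sqrt (R^2 - μ^2) ∧
    (1 - 8*δ*Real.sqrt (R^2 - μ^2) > 0 ↔
      E < Real.sqrt ((μ / Real.sqrt (b^2 + δ^2))^2 + 1/(64*δ^2*(b^2 + δ^2)))) ∧
    (1 - 8*δ*Real.sqrt (R^2 - μ^2) < 0 ↔
      E > Real.sqrt ((μ / Real.sqrt (b^2 + δ^2))^2 + 1/(64*δ^2*(b^2 + δ^2)))) := by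
  intro J
  have hS : 0 < b ^ 2 + δ ^ 2 := by positivity
  have hμ0 : 0 < μ := by norm_num [hμ]
  have hE : 0 < E := (div_pos hμ0 (sqrt_pos.mpr hS)).trans hEℓ
  have hμR : μ < R := hR ▸ (div_lt_iff₀ (sqrt_pos.mpr hS)).mp hEℓ
  have hRsin : R * sin (θNℓ - φ) = -√(R ^ 2 - μ ^ 2) := by
    rw [sin_sub_eq_neg_sqrt_of_eq_sub_arccos hθN, mul_neg,
      mul_sqrt_one_sub_div_sq (hμ0.trans hμR)]
  have htr : J.trace = -1 := by simp [J, trace_fin_two_of]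
  have hdet : J.det = 2 * δ * √(R ^ 2 - μ ^ 2) := by
    simp only [J, det_fin_two_of, hRsin]
    ring
  have hδ8 : 0 < 8 * δ := by positivity
  have hinv_sq : 1 / (8 * δ) ^ 2 = 1 / (64 * δ ^ 2) := by norm_num [mul_pow]
  refine ⟨htr, htr ▸ neg_one_lt_zero, hdet, ?_, by rw [htr, hdet]; ring, ?_, ?_⟩
  · rw [hdet]
    have hRμ : 0 < R ^ 2 - μ ^ 2 := by nlinarith
    exact mul_pos (by positivity) (sqrt_pos.mpr hRμ)
  · rw [gt_iff_lt, one_sub_mul_sqrt_pos_iff hδ8, hinv_sq, hR, ← div_div (1 : ℝ) (64 * δ ^ 2)]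
    exact sq_mul_sqrt_sub_sq_lt_iff hE.le hS
  · rw [one_sub_mul_sqrt_neg_iff hδ8, hinv_sq, hR, ← div_div (1 : ℝ) (64 * δ ^ 2)]
    exact lt_sq_mul_sqrt_sub_sq_iff hE hS

/-- For `a = 7/8`, `b = 4/5`, `μ = 7/30`, `δ > 0`, `E > E*ℓ(δ)`:
the Jacobian `J(0, θ_Nℓ)` has trace `−1 < 0`, determinant `2δ√(R² − μ²) > 0`,
discriminant `trace² − 4 det = 1 − 8δ√(R² − μ²)`, and this is positive (folded
node) iff `E < E**ℓ(δ) = √((E*ℓ(δ))² + 1/(64δ²(b² + δ²)))`, and negative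
(folded focus) iff `E > E**ℓ(δ)`. -/
theorem stmt_5 (a b μ δ E R φ θNℓ : ℝ)
    (ha : a = 7/8) (hb : b = 4/5) (hμ : μ = 7/30)
    (hδ : 0 < δ) (hE : 0 < E)
    (hR : R = E * Real.sqrt (b^2 + δ^2))
    (hφ : φ = Real.arctan (b / δ))
    (hEℓ : E > μ / Real.sqrt (b^2 + δ^2))
    (hθN : θNℓ = if Real.arccos (μ / R) ≤ φ then φ - Real.arccos (μ / R)
                 else φ - Real.arccos (μ / R) + 2*π) :
    let J : Matrix (Fin 2) (Fin 2) ℝ :=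
      !![-1, -(R * Real.sin (θNℓ - φ)); 2*δ*(0 - 1), 0]
    Matrix.trace J = -1 ∧ Matrix.trace J < 0 ∧
    J.det = 2*δ*Real.sqrt (R^2 - μ^2) ∧ 0 < J.det ∧
    (Matrix.trace J)^2 - 4 * J.det = 1 - 8*δ*Real.sqrt (R^2 - μ^2) ∧
    (1 - 8*δ*Real.sqrt (R^2 - μ^2) > 0 ↔
      E < Real.sqrt ((μ / Real.sqrt (b^2 + δ^2))^2 + 1/(64*δ^2*(b^2 + δ^2)))) ∧
    (1 - 8*δ*Real.sqrt (R^2 - μ^2) < 0 ↔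
      E > Real.sqrt ((μ / Real.sqrt (b^2 + δ^2))^2 + 1/(64*δ^2*(b^2 + δ^2)))) :=
  stmt_5_general b μ δ E R φ θNℓ hμ hδ hR hEℓ hθN
end
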